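/- For d ≥ 0, a scaling 𝔰 ∈ ℕ^{d+1}, α ∈ ℝ₊, points x, x̄, y ∈ ℝ^{d+1} and a smooth function f : ℝ^{d+1} → ℝ, the Taylor jet operators satisfy the recombination identity T_{α,x,y} f = ∑_{|ℓ|_𝔰 < α} (y − x̄)^ℓ/ℓ! · T_{α−|ℓ|_𝔰, x, x̄}[D^ℓ f]. -/

import Mathlib

open scoped BigOperators

/-- Partial derivative of `f : ℝ^{d+1} → ℝ` in the `i`-th coordinate direction. -/
noncomputable def pderiv' {n : ℕ} (i : Fin n) (f : (Fin n → ℝ) → ℝ) :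
    (Fin n → ℝ) → ℝ :=
  fun x => fderiv ℝ f x (Pi.single i 1)

/-- Mixed partial derivative `D^ℓ` of multi-order `ℓ`. -/
noncomputable def mderiv {n : ℕ} (ℓ : Fin n → ℕ) (f : (Fin n → ℝ) → ℝ) :
    (Fin n → ℝ) → ℝ :=
  (((List.finRange n).map fun i => (pderiv' i)^[ℓ i]).foldr (· ∘ ·) id) f

/-- The `𝔰`-scaled Taylor jet operator
`T_{α,x,y} f = ∑_{|ℓ|_𝔰 < α} (y−x)^ℓ/ℓ! (D^ℓ f)(x)`. -/
noncomputable def tjet {n : ℕ} (s : Fin n → ℕ) (α : ℝ) (x : Fin n → ℝ)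
    (f : (Fin n → ℝ) → ℝ) : (Fin n → ℝ) → ℝ :=
  fun y => ∑ᶠ ℓ : Fin n → ℕ,
    if (∑ i, (s i * ℓ i : ℝ)) < α then
      (∏ i, (y i - x i) ^ ℓ i) / (∏ i, ((ℓ i).factorial : ℝ)) * mderiv ℓ f x
    else 0

/-! Expanding `(y - x)^m / m! = ∑_{ℓ + k = m} (y - x̄)^ℓ / ℓ! · (x̄ - x)^k / k!` turns the left
side into a sum over the pairs `(ℓ, k)` with `|ℓ|_𝔰 + |k|_𝔰 < α` of
`(y - x̄)^ℓ / ℓ! · (x̄ - x)^k / k! · D^{ℓ+k} f(x)`. Summing over `k` first gives the right side,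
since partial derivatives of a smooth function commute, so that `D^k D^ℓ f = D^{ℓ+k} f`.
Positivity of `𝔰` makes the set of pairs finite, so no `finsum` collapses to its junk value `0`. -/

open Finset Function Nat

instance Pi.instHasAntidiagonal {ι μ : Type*} [Fintype ι] [DecidableEq ι] [AddMonoid μ]
    [HasAntidiagonal μ] : HasAntidiagonal (ι → μ) where
  antidiagonal m := (Fintype.piFinset fun i => antidiagonal (m i)).map
    (Equiv.arrowProdEquivProdArrow ι (fun _ => μ) (fun _ => μ)).toEmbedding
  mem_antidiagonal := by simp [Equiv.arrowProdEquivProdArrow, funext_iff]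

lemma Pi.antidiagonal_eq_map_piFinset {ι μ : Type*} [Fintype ι] [DecidableEq ι] [AddMonoid μ]
    [HasAntidiagonal μ] (m : ι → μ) :
    antidiagonal m = (Fintype.piFinset fun i => antidiagonal (m i)).map
      (Equiv.arrowProdEquivProdArrow ι (fun _ => μ) (fun _ => μ)).toEmbedding :=
  rfl

lemma add_pow_div_factorial {K : Type*} [Field K] [CharZero K] (a b : K) (m : ℕ) :
    (a + b) ^ m / m ! = ∑ q ∈ antidiagonal m, a ^ q.1 / q.1 ! * (b ^ q.2 / q.2 !) := by
  rw [(Commute.all a b).add_pow', sum_div]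
  refine sum_congr rfl fun q hq => ?_
  rw [← mem_antidiagonal.mp hq, nsmul_eq_mul, Nat.cast_add_choose]
  field_simp [Nat.factorial_ne_zero]

lemma finsum_sum_antidiagonal {A M : Type*} [AddMonoid A] [HasAntidiagonal A] [AddCommMonoid M]
    {g : A × A → M} (hg : g.support.Finite) :
    ∑ᶠ m, ∑ p ∈ antidiagonal m, g p = ∑ᶠ p, g p := by
  classical
  set S := hg.toFinset
  have hsupp : (support fun m => ∑ p ∈ antidiagonal m, g p) ⊆ S.image fun p => p.1 + p.2 := by
    intro m hm
    obtain ⟨p, hp, hgp⟩ := exists_ne_zero_of_sum_ne_zero hm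
    exact mem_image.mpr ⟨p, hg.mem_toFinset.mpr hgp, mem_antidiagonal.mp hp⟩
  rw [finsum_eq_sum_of_support_subset _ hsupp,
    finsum_eq_sum_of_support_subset g hg.coe_toFinset.ge,
    ← sum_fiberwise_of_maps_to fun (p : A × A) hp => mem_image_of_mem (fun p => p.1 + p.2) hp]
  refine sum_congr rfl fun m _ => (sum_subset (fun p hp => ?_) fun p hp hpS => ?_).symm
  · exact mem_antidiagonal.mpr (mem_filter.mp hp).2
  · by_contra hgp
    exact hpS (mem_filter.mpr ⟨hg.mem_toFinset.mpr hgp, mem_antidiagonal.mp hp⟩)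

section MultiIndex

variable {n : ℕ}

noncomputable def scaledDegree (s ℓ : Fin n → ℕ) : ℝ := ∑ i, (s i * ℓ i : ℝ)

noncomputable def taylorMonomial (u : Fin n → ℝ) (ℓ : Fin n → ℕ) : ℝ :=
  (∏ i, u i ^ ℓ i) / ∏ i, ((ℓ i)! : ℝ)

lemma scaledDegree_nonneg (s ℓ : Fin n → ℕ) : 0 ≤ scaledDegree s ℓ := by
  unfold scaledDegree; positivity

lemma scaledDegree_add (s ℓ k : Fin n → ℕ) :
    scaledDegree s (ℓ + k) = scaledDegree s ℓ + scaledDegree s k := by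
  simp only [scaledDegree, Pi.add_apply, Nat.cast_add, mul_add, sum_add_distrib]

lemma le_scaledDegree {s : Fin n → ℕ} (hs : ∀ i, 0 < s i) (ℓ : Fin n → ℕ) (i : Fin n) :
    (ℓ i : ℝ) ≤ scaledDegree s ℓ :=
  calc (ℓ i : ℝ) ≤ s i * ℓ i := le_mul_of_one_le_left (by positivity) (by exact_mod_cast hs i)
    _ ≤ scaledDegree s ℓ := single_le_sum (f := fun j => (s j * ℓ j : ℝ))
        (fun j _ => by positivity) (mem_univ i)

lemma finite_setOf_scaledDegree_lt {s : Fin n → ℕ} (hs : ∀ i, 0 < s i) (β : ℝ) :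
    {ℓ | scaledDegree s ℓ < β}.Finite :=
  (Set.finite_Iic fun _ => ⌈β⌉₊).subset fun ℓ hℓ i =>
    Nat.cast_le.mp (((le_scaledDegree hs ℓ i).trans hℓ.le).trans (Nat.le_ceil β))

lemma taylorMonomial_eq_prod (u : Fin n → ℝ) (ℓ : Fin n → ℕ) :
    taylorMonomial u ℓ = ∏ i, u i ^ ℓ i / (ℓ i)! :=
  (prod_div_distrib _ _).symm

lemma taylorMonomial_add (u v : Fin n → ℝ) (m : Fin n → ℕ) :
    taylorMonomial (u + v) m =
      ∑ p ∈ antidiagonal m, taylorMonomial u p.1 * taylorMonomial v p.2 := by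
  simp_rw [taylorMonomial_eq_prod, ← prod_mul_distrib, Pi.add_apply, add_pow_div_factorial,
    prod_univ_sum, Pi.antidiagonal_eq_map_piFinset, sum_map]
  rfl

end MultiIndex

section PartialDerivatives

variable {n : ℕ} {f : (Fin n → ℝ) → ℝ}

lemma contDiff_pderiv' (i : Fin n) (hf : ContDiff ℝ (⊤ : ℕ∞) f) :
    ContDiff ℝ (⊤ : ℕ∞) (pderiv' i f) :=
  (hf.fderiv_right le_rfl).clm_apply contDiff_const

lemma contDiff_iterate_pderiv' (i : Fin n) (c : ℕ) (hf : ContDiff ℝ (⊤ : ℕ∞) f) :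
    ContDiff ℝ (⊤ : ℕ∞) ((pderiv' i)^[c] f) := by
  induction c with
  | zero => exact hf
  | succ c ih => rw [iterate_succ_apply']; exact contDiff_pderiv' i ih

lemma pderiv'_comm (i j : Fin n) (hf : ContDiff ℝ (⊤ : ℕ∞) f) :
    pderiv' i (pderiv' j f) = pderiv' j (pderiv' i f) := by
  funext z
  have hf' : ContDiff ℝ (⊤ : ℕ∞) (fderiv ℝ f) := hf.fderiv_right le_rfl
  have hdf : DifferentiableAt ℝ (fderiv ℝ f) z := (hf'.differentiable (by simp)).differentiableAt
  have hsymm : IsSymmSndFDerivAt ℝ f z :=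
    hf.contDiffAt.isSymmSndFDerivAt <| by
      rw [minSmoothness_of_isRCLikeNormedField]; exact WithTop.coe_le_coe.mpr le_top
  have hpartial (v w : Fin n → ℝ) :
      fderiv ℝ (fun z => fderiv ℝ f z w) z v = fderiv ℝ (fderiv ℝ f) z v w := by
    simp [fderiv_clm_apply hdf (differentiableAt_const w)]
  unfold pderiv'
  rw [hpartial, hpartial]
  exact hsymm _ _

lemma pderiv'_iterate_comm (i j : Fin n) (b : ℕ) (hf : ContDiff ℝ (⊤ : ℕ∞) f) :
    pderiv' i ((pderiv' j)^[b] f) = (pderiv' j)^[b] (pderiv' i f) := by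
  induction b with
  | zero => rfl
  | succ b ih =>
    rw [iterate_succ_apply', iterate_succ_apply',
      pderiv'_comm i j (contDiff_iterate_pderiv' j b hf), ih]

lemma iterate_pderiv'_comm (i j : Fin n) (a b : ℕ) (hf : ContDiff ℝ (⊤ : ℕ∞) f) :
    (pderiv' i)^[a] ((pderiv' j)^[b] f) = (pderiv' j)^[b] ((pderiv' i)^[a] f) := by
  induction a with
  | zero => rfl
  | succ a ih =>
    rw [iterate_succ_apply', iterate_succ_apply', ih,
      pderiv'_iterate_comm i j b (contDiff_iterate_pderiv' i a hf)]

noncomputable def pderivAlong (m : Fin n → ℕ) (l : List (Fin n)) (f : (Fin n → ℝ) → ℝ) :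
    (Fin n → ℝ) → ℝ :=
  ((l.map fun i => (pderiv' i)^[m i]).foldr (· ∘ ·) id) f

lemma pderivAlong_cons (m : Fin n → ℕ) (a : Fin n) (l : List (Fin n)) :
    pderivAlong m (a :: l) f = (pderiv' a)^[m a] (pderivAlong m l f) :=
  rfl

lemma contDiff_pderivAlong (m : Fin n → ℕ) (l : List (Fin n))
    (hf : ContDiff ℝ (⊤ : ℕ∞) f) :
    ContDiff ℝ (⊤ : ℕ∞) (pderivAlong m l f) := by
  induction l with
  | nil => exact hf
  | cons a l ih => exact contDiff_iterate_pderiv' a (m a) ih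

lemma iterate_pderiv'_pderivAlong (i : Fin n) (c : ℕ) (m : Fin n → ℕ) (l : List (Fin n))
    (hf : ContDiff ℝ (⊤ : ℕ∞) f) :
    (pderiv' i)^[c] (pderivAlong m l f) = pderivAlong m l ((pderiv' i)^[c] f) := by
  induction l with
  | nil => rfl
  | cons a l ih =>
    rw [pderivAlong_cons, pderivAlong_cons,
      iterate_pderiv'_comm i a c (m a) (contDiff_pderivAlong m l hf), ih]

lemma pderivAlong_pderivAlong (k ℓ : Fin n → ℕ) (l : List (Fin n))
    (hf : ContDiff ℝ (⊤ : ℕ∞) f) :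
    pderivAlong k l (pderivAlong ℓ l f) = pderivAlong (ℓ + k) l f := by
  induction l with
  | nil => rfl
  | cons a l ih =>
    rw [pderivAlong_cons, pderivAlong_cons,
      ← iterate_pderiv'_pderivAlong a (ℓ a) k l (contDiff_pderivAlong ℓ l hf),
      ← iterate_add_apply, ih, pderivAlong_cons, Pi.add_apply, add_comm]

lemma mderiv_mderiv (k ℓ : Fin n → ℕ) (hf : ContDiff ℝ (⊤ : ℕ∞) f) :
    mderiv k (mderiv ℓ f) = mderiv (ℓ + k) f :=
  pderivAlong_pderivAlong k ℓ (List.finRange n) hf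

end PartialDerivatives

section Recombination

variable {n : ℕ} (s : Fin n → ℕ) (α : ℝ) (x xb y : Fin n → ℝ) (f : (Fin n → ℝ) → ℝ)

lemma tjet_eq_finsum_taylorMonomial : tjet s α x f y =
    ∑ᶠ ℓ, if scaledDegree s ℓ < α then taylorMonomial (y - x) ℓ * mderiv ℓ f x else 0 :=
  rfl

noncomputable def recombinationTerm (p : (Fin n → ℕ) × (Fin n → ℕ)) : ℝ :=
  if scaledDegree s p.1 + scaledDegree s p.2 < α then
    taylorMonomial (y - xb) p.1 * (taylorMonomial (xb - x) p.2 * mderiv (p.1 + p.2) f x)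
  else 0

lemma tjet_eq_finsum_sum_antidiagonal :
    tjet s α x f y = ∑ᶠ m, ∑ p ∈ antidiagonal m, recombinationTerm s α x xb y f p := by
  rw [tjet_eq_finsum_taylorMonomial]
  refine finsum_congr fun m => ?_
  rw [← sub_add_sub_cancel y xb x, taylorMonomial_add, sum_mul, ite_sum_zero]
  refine sum_congr rfl fun p hp => ?_
  rw [recombinationTerm, ← scaledDegree_add, mem_antidiagonal.mp hp, mul_assoc]

lemma finite_support_recombinationTerm {s : Fin n → ℕ} (hs : ∀ i, 0 < s i) :
    (support (recombinationTerm s α x xb y f)).Finite := by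
  have hfin := finite_setOf_scaledDegree_lt hs α
  refine (hfin.prod hfin).subset fun p hp => ?_
  have hlt : scaledDegree s p.1 + scaledDegree s p.2 < α := by
    by_contra h
    exact hp (if_neg h)
  exact ⟨show scaledDegree s p.1 < α by linarith [scaledDegree_nonneg s p.2],
    show scaledDegree s p.2 < α by linarith [scaledDegree_nonneg s p.1]⟩

lemma ite_mul_tjet_eq_finsum {f : (Fin n → ℝ) → ℝ} (hf : ContDiff ℝ (⊤ : ℕ∞) f)
    (ℓ : Fin n → ℕ) :
    (if scaledDegree s ℓ < α then
        taylorMonomial (y - xb) ℓ * tjet s (α - scaledDegree s ℓ) x (mderiv ℓ f) xb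
      else 0) = ∑ᶠ k, recombinationTerm s α x xb y f (ℓ, k) := by
  split_ifs with hℓ
  · rw [tjet_eq_finsum_taylorMonomial, mul_finsum]
    refine finsum_congr fun k => ?_
    simp only [recombinationTerm, lt_sub_iff_add_lt', mderiv_mderiv k ℓ hf, mul_ite, mul_zero]
  · symm
    refine finsum_eq_zero_of_forall_eq_zero fun k => if_neg fun h => hℓ ?_
    linarith [scaledDegree_nonneg s k]

end Recombination

theorem tjet_recombination_general {d : ℕ} (s : Fin (d + 1) → ℕ) (hs : ∀ i, 0 < s i)
    (α : ℝ) (x xb y : Fin (d + 1) → ℝ)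
    (f : (Fin (d + 1) → ℝ) → ℝ) (hf : ContDiff ℝ (⊤ : ℕ∞) f) :
    tjet s α x f y
      = ∑ᶠ ℓ : Fin (d + 1) → ℕ,
          if (∑ i, (s i * ℓ i : ℝ)) < α then
            (∏ i, (y i - xb i) ^ ℓ i) / (∏ i, ((ℓ i).factorial : ℝ))
              * tjet s (α - ∑ i, (s i * ℓ i : ℝ)) x (mderiv ℓ f) xb
          else 0 := by
  rw [tjet_eq_finsum_sum_antidiagonal s α x xb y f,
    finsum_sum_antidiagonal (finite_support_recombinationTerm α x xb y f hs),
    finsum_curry _ (finite_support_recombinationTerm α x xb y f hs)]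
  exact finsum_congr fun ℓ => (ite_mul_tjet_eq_finsum s α x xb y hf ℓ).symm

/-- the recombination identity
`T_{α,x,y} f = ∑_{|ℓ|_𝔰 < α} (y − x̄)^ℓ/ℓ! · T_{α−|ℓ|_𝔰, x, x̄}[D^ℓ f]`. -/
theorem tjet_recombination {d : ℕ} (s : Fin (d + 1) → ℕ) (hs : ∀ i, 0 < s i)
    (α : ℝ) (hα : 0 ≤ α) (x xb y : Fin (d + 1) → ℝ)
    (f : (Fin (d + 1) → ℝ) → ℝ) (hf : ContDiff ℝ (⊤ : ℕ∞) f) :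
    tjet s α x f y
      = ∑ᶠ ℓ : Fin (d + 1) → ℕ,
          if (∑ i, (s i * ℓ i : ℝ)) < α then
            (∏ i, (y i - xb i) ^ ℓ i) / (∏ i, ((ℓ i).factorial : ℝ))
              * tjet s (α - ∑ i, (s i * ℓ i : ℝ)) x (mderiv ℓ f) xb
          else 0 :=
  tjet_recombination_general s hs α x xb y f hf
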